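/- Let v : ℝ² → ℝ be a positive C³ function satisfying v·Δv = ‖∇v‖² + 1/2 at every point of ℝ², and set P := Δv. Then for every compactly supported C¹ function φ : ℝ² → ℝ one has ∫_{ℝ²} P·φ² dx ≤ 4·∫_{ℝ²} v·‖∇φ‖² dx, with integrals taken with respect to Lebesgue measure. -/

import Mathlib

/-!
Green's identity with the test function `φ²` turns `∫ Δv φ²` into `-2 ∫ φ ⟪∇v, ∇φ⟫`. The equation
`v Δv = ‖∇v‖² + 1/2` gives `‖∇v‖² ≤ v Δv`, so Cauchy–Schwarz and Young's inequality bound the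
integrand pointwise by `½ Δv φ² + 2 v ‖∇φ‖²`. Since `Δv φ²` is continuous with compact support its
integral is finite, and absorbing half of it into the left-hand side gives the factor `4`.
-/

open MeasureTheory Metric

/-- The Euclidean Laplacian: the trace of the Hessian. -/
noncomputable def lap {d : ℕ} (u : EuclideanSpace ℝ (Fin d) → ℝ)
    (x : EuclideanSpace ℝ (Fin d)) : ℝ :=
  ∑ i, iteratedFDeriv ℝ 2 u x ![EuclideanSpace.single i 1, EuclideanSpace.single i 1]

open InnerProductSpace Laplacian

section Gradient

variable {E : Type*} [NormedAddCommGroup E] [InnerProductSpace ℝ E] [CompleteSpace E]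
  {f g : E → ℝ}

theorem ContDiff.continuous_gradient (hf : ContDiff ℝ 1 f) : Continuous (gradient f) :=
  (toDual ℝ E).symm.continuous.comp (hf.continuous_fderiv one_ne_zero)

theorem HasCompactSupport.gradient (hf : HasCompactSupport f) : HasCompactSupport (gradient f) :=
  (hf.fderiv ℝ).comp_left (map_zero (toDual ℝ E).symm)

theorem inner_gradient_eq_sum {ι : Type*} [Fintype ι] (b : OrthonormalBasis ι ℝ E) (x : E) :
    ⟪gradient f x, gradient g x⟫_ℝ = ∑ i, fderiv ℝ f x (b i) * fderiv ℝ g x (b i) := by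
  rw [← b.sum_inner_mul_inner]
  refine Finset.sum_congr rfl fun i _ ↦ ?_
  rw [inner_gradient_left, real_inner_comm, inner_gradient_left]

theorem inner_gradient_sq {x : E} (hf : DifferentiableAt ℝ f x) (w : E) :
    ⟪w, gradient (fun y ↦ f y ^ 2) x⟫_ℝ = 2 * f x * ⟪w, gradient f x⟫_ℝ := by
  rw [real_inner_comm, inner_gradient_left, fderiv_fun_pow 2 hf, real_inner_comm,
    inner_gradient_left]
  simp

end Gradient

section Laplacian

variable {E : Type*} [NormedAddCommGroup E] [InnerProductSpace ℝ E] [FiniteDimensional ℝ E]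
  {u : E → ℝ}

theorem laplacian_eq_sum_fderiv_fderiv {ι : Type*} [Fintype ι] (b : OrthonormalBasis ι ℝ E)
    (x : E) :
    Δ u x = ∑ i, fderiv ℝ (fderiv ℝ u) x (b i) (b i) := by
  simp [laplacian_eq_iteratedFDeriv_orthonormalBasis u b, iteratedFDeriv_two_apply]

theorem ContDiff.continuous_laplacian {n : WithTop ℕ∞} (hu : ContDiff ℝ n u) (hn : 2 ≤ n) :
    Continuous (Δ u) := by
  rw [laplacian_eq_iteratedFDeriv_stdOrthonormalBasis]
  exact continuous_finsetSum _ fun i _ ↦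
    (continuous_eval_const _).comp (hu.continuous_iteratedFDeriv (by exact_mod_cast hn))

end Laplacian

theorem lap_eq_laplacian {d : ℕ} (u : EuclideanSpace ℝ (Fin d) → ℝ) : lap u = Δ u := by
  ext x
  simp [lap, laplacian_eq_iteratedFDeriv_orthonormalBasis u (EuclideanSpace.basisFun (Fin d) ℝ)]

section IntegrationByParts

variable {E : Type*} [NormedAddCommGroup E] [NormedSpace ℝ E] [FiniteDimensional ℝ E]
  [MeasurableSpace E] [BorelSpace E] {μ : Measure E} [μ.IsAddHaarMeasure] {f g : E → ℝ}

theorem integral_fderiv_mul_eq_neg_integral_mul_fderiv (hf : ContDiff ℝ 1 f)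
    (hg : ContDiff ℝ 1 g) (hgc : HasCompactSupport g) (w : E) :
    ∫ x, fderiv ℝ f x w * g x ∂μ = -∫ x, f x * fderiv ℝ g x w ∂μ := by
  have hf' : Continuous fun x ↦ fderiv ℝ f x w :=
    (hf.continuous_fderiv one_ne_zero).clm_apply continuous_const
  have hg' : Continuous fun x ↦ fderiv ℝ g x w :=
    (hg.continuous_fderiv one_ne_zero).clm_apply continuous_const
  rw [integral_mul_fderiv_eq_neg_fderiv_mul_of_integrable, neg_neg]
  · exact (hf'.mul hg.continuous).integrable_of_hasCompactSupport hgc.mul_left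
  · exact (hf.continuous.mul hg').integrable_of_hasCompactSupport (hgc.fderiv_apply ℝ w).mul_left
  · exact (hf.continuous.mul hg.continuous).integrable_of_hasCompactSupport hgc.mul_left
  · exact fun x _ ↦ hf.differentiable one_ne_zero x
  · exact fun x _ ↦ hg.differentiable one_ne_zero x

end IntegrationByParts

theorem neg_two_mul_mul_inner_le {F : Type*} [NormedAddCommGroup F] [InnerProductSpace ℝ F]
    {a b : F} {t v p : ℝ} (hv : 0 < v) (hp : ‖a‖ ^ 2 ≤ v * p) :
    -(2 * t * ⟪a, b⟫_ℝ) ≤ 1 / 2 * (p * t ^ 2) + 2 * (v * ‖b‖ ^ 2) := by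
  have hcs : -(t * ⟪a, b⟫_ℝ) ≤ |t| * (‖a‖ * ‖b‖) :=
    calc -(t * ⟪a, b⟫_ℝ) ≤ |t * ⟪a, b⟫_ℝ| := neg_le_abs _
      _ = |t| * |⟪a, b⟫_ℝ| := abs_mul _ _
      _ ≤ |t| * (‖a‖ * ‖b‖) := by gcongr; exact abs_real_inner_le_norm a b
  have habs : (|t| * ‖a‖) ^ 2 = t ^ 2 * ‖a‖ ^ 2 := by rw [mul_pow, sq_abs]
  -- Young: `2 v |t| ‖a‖ ‖b‖ ≤ (|t| ‖a‖)² / 2 + 2 (v ‖b‖)²`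
  refine le_of_mul_le_mul_left ?_ hv
  nlinarith [sq_nonneg (|t| * ‖a‖ - 2 * v * ‖b‖), mul_le_mul_of_nonneg_left hcs hv.le,
    mul_le_mul_of_nonneg_left hp (sq_nonneg t)]

section Integrals

variable {E : Type*} [NormedAddCommGroup E] [InnerProductSpace ℝ E] [FiniteDimensional ℝ E]
  [MeasurableSpace E] [BorelSpace E] {μ : Measure E} [μ.IsAddHaarMeasure] {u g v φ : E → ℝ}

theorem integral_laplacian_mul_eq_neg_integral_inner_gradient (hu : ContDiff ℝ 2 u)
    (hg : ContDiff ℝ 1 g) (hgc : HasCompactSupport g) :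
    ∫ x, Δ u x * g x ∂μ = -∫ x, ⟪gradient u x, gradient g x⟫_ℝ ∂μ := by
  let b := stdOrthonormalBasis ℝ E
  have hu' : ContDiff ℝ 1 (fderiv ℝ u) := hu.fderiv_right one_add_one_eq_two.le
  have hpartial : ∀ i, ContDiff ℝ 1 fun x ↦ fderiv ℝ u x (b i) :=
    fun i ↦ hu'.clm_apply contDiff_const
  have hsecond : ∀ i x, fderiv ℝ (fderiv ℝ u) x (b i) (b i) =
      fderiv ℝ (fun y ↦ fderiv ℝ u y (b i)) x (b i) := fun i x ↦ by
    rw [fderiv_clm_apply (hu'.differentiable one_ne_zero x) (differentiableAt_const _)]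
    simp
  simp only [laplacian_eq_sum_fderiv_fderiv b, inner_gradient_eq_sum b, Finset.sum_mul, hsecond]
  rw [integral_finsetSum, integral_finsetSum, ← Finset.sum_neg_distrib]
  · exact Finset.sum_congr rfl fun i _ ↦
      integral_fderiv_mul_eq_neg_integral_mul_fderiv (hpartial i) hg hgc (b i)
  · exact fun i _ ↦ ((hpartial i).continuous.mul ((hg.continuous_fderiv one_ne_zero).clm_apply
      continuous_const)).integrable_of_hasCompactSupport (hgc.fderiv_apply ℝ (b i)).mul_left
  · exact fun i _ ↦ ((((hpartial i).continuous_fderiv one_ne_zero).clm_apply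
      continuous_const).mul hg.continuous).integrable_of_hasCompactSupport hgc.mul_left

theorem integral_laplacian_mul_sq (hv : ContDiff ℝ 2 v) (hφ : ContDiff ℝ 1 φ)
    (hφc : HasCompactSupport φ) :
    ∫ x, Δ v x * φ x ^ 2 ∂μ = ∫ x, -(2 * φ x * ⟪gradient v x, gradient φ x⟫_ℝ) ∂μ := by
  rw [integral_laplacian_mul_eq_neg_integral_inner_gradient hv (hφ.pow 2)
    (hφc.comp_left (g := fun t : ℝ ↦ t ^ 2) (by norm_num)), ← integral_neg]
  congr 1 with x
  rw [inner_gradient_sq (hφ.differentiable one_ne_zero x)]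

theorem integral_laplacian_mul_sq_le (hv : ContDiff ℝ 2 v) (hvpos : ∀ x, 0 < v x)
    (hgrad : ∀ x, ‖gradient v x‖ ^ 2 ≤ v x * Δ v x) (hφ : ContDiff ℝ 1 φ)
    (hφc : HasCompactSupport φ) :
    ∫ x, Δ v x * φ x ^ 2 ∂μ ≤ 4 * ∫ x, v x * ‖gradient φ x‖ ^ 2 ∂μ := by
  have hφ2c : HasCompactSupport fun x ↦ φ x ^ 2 :=
    hφc.comp_left (g := fun t : ℝ ↦ t ^ 2) (by norm_num)
  have hI₁ : Integrable (fun x ↦ Δ v x * φ x ^ 2) μ :=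
    ((hv.continuous_laplacian le_rfl).mul (hφ.continuous.pow 2)).integrable_of_hasCompactSupport
      hφ2c.mul_left
  have hdφc : HasCompactSupport fun x ↦ ‖gradient φ x‖ ^ 2 :=
    hφc.gradient.comp_left (g := fun w ↦ ‖w‖ ^ 2) (by simp)
  have hI₂ : Integrable (fun x ↦ v x * ‖gradient φ x‖ ^ 2) μ :=
    (hv.continuous.mul (hφ.continuous_gradient.norm.pow 2)).integrable_of_hasCompactSupport
      hdφc.mul_left
  have hI₃ : Integrable (fun x ↦ -(2 * φ x * ⟪gradient v x, gradient φ x⟫_ℝ)) μ :=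
    ((continuous_const.mul hφ.continuous).mul ((hv.of_le one_le_two).continuous_gradient.inner
      hφ.continuous_gradient)).integrable_of_hasCompactSupport hφc.mul_left.mul_right |>.neg
  have key : ∫ x, Δ v x * φ x ^ 2 ∂μ ≤
      1 / 2 * (∫ x, Δ v x * φ x ^ 2 ∂μ) + 2 * ∫ x, v x * ‖gradient φ x‖ ^ 2 ∂μ :=
    calc ∫ x, Δ v x * φ x ^ 2 ∂μ
        = ∫ x, -(2 * φ x * ⟪gradient v x, gradient φ x⟫_ℝ) ∂μ :=
          integral_laplacian_mul_sq hv hφ hφc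
      _ ≤ ∫ x, (1 / 2 * (Δ v x * φ x ^ 2) + 2 * (v x * ‖gradient φ x‖ ^ 2)) ∂μ :=
          integral_mono hI₃ ((hI₁.const_mul _).add (hI₂.const_mul _))
            fun x ↦ neg_two_mul_mul_inner_le (hvpos x) (hgrad x)
      _ = 1 / 2 * (∫ x, Δ v x * φ x ^ 2 ∂μ) + 2 * ∫ x, v x * ‖gradient φ x‖ ^ 2 ∂μ := by
          rw [integral_add (hI₁.const_mul _) (hI₂.const_mul _), integral_const_mul,
            integral_const_mul]
  linarith

end Integrals

/-- The key integral estimate (6.2)–(6.3) in the proof of Theorem 1.2, Euclidean case: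
if `v Δv = ‖∇v‖² + 1/2` with `v > 0` and `P := Δv`, then
`∫ P φ² ≤ 4 ∫ v ‖∇φ‖²` for every compactly supported C¹ function `φ`. -/
theorem stmt_19 (v : EuclideanSpace ℝ (Fin 2) → ℝ) (hv : ContDiff ℝ 3 v)
    (hvpos : ∀ x, 0 < v x)
    (heq : ∀ x, v x * lap v x = ‖gradient v x‖ ^ 2 + 1 / 2)
    (P : EuclideanSpace ℝ (Fin 2) → ℝ) (hP : ∀ x, P x = lap v x) :
    ∀ φ : EuclideanSpace ℝ (Fin 2) → ℝ, ContDiff ℝ 1 φ → HasCompactSupport φ →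
      (∫ x, P x * φ x ^ 2 ∂volume) ≤ 4 * ∫ x, v x * ‖gradient φ x‖ ^ 2 ∂volume := by
  intro φ hφ hφc
  have hPΔ : P = Δ v := funext fun x ↦ (hP x).trans (congrFun (lap_eq_laplacian v) x)
  have hgrad : ∀ x, ‖gradient v x‖ ^ 2 ≤ v x * Δ v x := fun x ↦ by
    rw [← hPΔ, hP x]
    linarith [heq x]
  rw [hPΔ]
  exact integral_laplacian_mul_sq_le (hv.of_le (by norm_num)) hvpos hgrad hφ hφc
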